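/- Let 0 -> V >< W -> ghat >< hhat -> g >< h -> 0 be an abelian extension of a matched pair of 3-Lie algebras (g,h,rho,psi) by (V,W), with section (s1,s2), induced representation (V,W,alpha,beta) and associated 2-cocycle (omega,theta,nu,phi). For (alpha,beta) = ((alpha1,alpha2),(beta1,beta2)) in Aut(g >< h) x Aut(V >< W) define the transformed 2-cochain (omega,theta,nu,phi)_{(alpha,beta)} by omega_{(alpha,beta)}(x1,x2,x3) = beta1(omega(alpha1^{-1}(x1),alpha1^{-1}(x2),alpha1^{-1}(x3))), theta_{(alpha,beta)}(a1,a2,a3) = beta2(theta(alpha2^{-1}(a1),alpha2^{-1}(a2),alpha2^{-1}(a3))), nu_{(alpha,beta)}(x1,x2)(a) = beta2(nu(alpha1^{-1}(x1),alpha1^{-1}(x2))(alpha2^{-1}(a))), phi_{(alpha,beta)}(a1,a2)(x) = beta1(phi(alpha2^{-1}(a1),alpha2^{-1}(a2))(alpha1^{-1}(x))). If (alpha,beta) belongs to the subgroup C of compatible pairs, then (omega,theta,nu,phi)_{(alpha,beta)} is a 2-cocycle. -/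
import Mathlib


/-- A 3-Lie algebra over `k`: an alternating trilinear bracket satisfying the
fundamental (Jacobi/Filippov) identity. -/
structure ThreeLie (k : Type*) (g : Type*) [CommRing k] [AddCommGroup g] [Module k g] where
  br : g →ₗ[k] g →ₗ[k] g →ₗ[k] g
  alt₁ : ∀ x y, br x x y = 0
  alt₂ : ∀ x y, br x y y = 0
  fund : ∀ x1 x2 y1 y2 y3,
    br x1 x2 (br y1 y2 y3) =
      br (br x1 x2 y1) y2 y3 + br y1 (br x1 x2 y2) y3 + br y1 y2 (br x1 x2 y3)

/-- A representation of a 3-Lie algebra `(g, L)` on a module `V`. -/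
structure Rep3 (k : Type*) (g V : Type*) [CommRing k] [AddCommGroup g] [Module k g]
    [AddCommGroup V] [Module k V] (L : ThreeLie k g) where
  ρ : g →ₗ[k] g →ₗ[k] Module.End k V
  skew : ∀ x, ρ x x = 0
  rep1 : ∀ x1 x2 x3 x4 v, ρ x1 x2 (ρ x3 x4 v) =
    ρ x3 x4 (ρ x1 x2 v) + ρ (L.br x1 x2 x3) x4 v + ρ x3 (L.br x1 x2 x4) v
  rep2 : ∀ x1 x2 x3 x4 v, ρ (L.br x1 x2 x3) x4 v =
    ρ x1 x2 (ρ x3 x4 v) + ρ x2 x3 (ρ x1 x4 v) + ρ x3 x1 (ρ x2 x4 v)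

/-- A matched pair of 3-Lie algebras `(g, h, ρ, ψ)`. -/
structure MatchedPair (k : Type*) (g h : Type*) [CommRing k] [AddCommGroup g] [Module k g]
    [AddCommGroup h] [Module k h] where
  Lg : ThreeLie k g
  Lh : ThreeLie k h
  ρ : Rep3 k g h Lg
  ψ : Rep3 k h g Lh
  mp1 : ∀ a4 a5 x1 x2 x3, ψ.ρ a4 a5 (Lg.br x1 x2 x3) =
    Lg.br (ψ.ρ a4 a5 x1) x2 x3 + Lg.br x1 (ψ.ρ a4 a5 x2) x3 + Lg.br x1 x2 (ψ.ρ a4 a5 x3)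
  mp2 : ∀ x1 x2 x4 a3 a5, ψ.ρ (ρ.ρ x1 x2 a3) a5 x4 =
    ψ.ρ (ρ.ρ x1 x4 a5) a3 x2 - ψ.ρ (ρ.ρ x2 x4 a5) a3 x1 + Lg.br x1 x2 (ψ.ρ a3 a5 x4)
  mp3 : ∀ a2 a3 x1 x4 x5, Lg.br (ψ.ρ a2 a3 x1) x4 x5 =
    ψ.ρ a2 a3 (Lg.br x1 x4 x5) + ψ.ρ (ρ.ρ x4 x5 a2) a3 x1 + ψ.ρ a2 (ρ.ρ x4 x5 a3) x1
  mp4 : ∀ x4 x5 a1 a2 a3, ρ.ρ x4 x5 (Lh.br a1 a2 a3) =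
    Lh.br (ρ.ρ x4 x5 a1) a2 a3 + Lh.br a1 (ρ.ρ x4 x5 a2) a3 + Lh.br a1 a2 (ρ.ρ x4 x5 a3)
  mp5 : ∀ a1 a2 a4 x3 x5, ρ.ρ (ψ.ρ a1 a2 x3) x5 a4 =
    ρ.ρ (ψ.ρ a1 a4 x5) x3 a2 - ρ.ρ (ψ.ρ a2 a4 x5) x3 a1 + Lh.br a1 a2 (ρ.ρ x3 x5 a4)
  mp6 : ∀ x2 x3 a1 a4 a5, Lh.br (ρ.ρ x2 x3 a1) a4 a5 =
    ρ.ρ x2 x3 (Lh.br a1 a4 a5) + ρ.ρ (ψ.ρ a4 a5 x2) x3 a1 + ρ.ρ x2 (ψ.ρ a4 a5 x3) a1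

section MPRepSec

variable (k : Type*) (g h V W : Type*) [CommRing k]
  [AddCommGroup g] [Module k g] [AddCommGroup h] [Module k h]
  [AddCommGroup V] [Module k V] [AddCommGroup W] [Module k W]

/-- The raw data of a representation of a matched pair of 3-Lie algebras. -/
structure MPRepData where
  ρV : g →ₗ[k] g →ₗ[k] Module.End k V
  ψV : h →ₗ[k] h →ₗ[k] Module.End k V
  ρW : g →ₗ[k] g →ₗ[k] Module.End k W
  ψW : h →ₗ[k] h →ₗ[k] Module.End k W
  A : V →ₗ[k] g →ₗ[k] h →ₗ[k] W
  B : W →ₗ[k] h →ₗ[k] g →ₗ[k] V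

variable {k g h V W}

/-- A representation `(V, W, α, β)` of a matched pair of 3-Lie algebras
`(g, h, ρ, ψ)` (Definition 2.3 of arXiv:2508.14044). -/
structure MPRep (M : MatchedPair k g h) where
  rV : Rep3 k g V M.Lg
  pV : Rep3 k h V M.Lh
  rW : Rep3 k g W M.Lg
  pW : Rep3 k h W M.Lh
  A : V →ₗ[k] g →ₗ[k] h →ₗ[k] W
  B : W →ₗ[k] h →ₗ[k] g →ₗ[k] V
  iden1 : ∀ a1 a2 x2 x3 v1, pV.ρ a1 a2 (rV.ρ x2 x3 v1) =
    rV.ρ (M.ψ.ρ a1 a2 x2) x3 v1 + rV.ρ x2 (M.ψ.ρ a1 a2 x3) v1 + rV.ρ x2 x3 (pV.ρ a1 a2 v1)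
  iden2 : ∀ a1 a2 x1 x3 v2, pV.ρ a1 a2 (rV.ρ x1 x3 v2) =
    rV.ρ (M.ψ.ρ a1 a2 x1) x3 v2 + rV.ρ x1 (M.ψ.ρ a1 a2 x3) v2 + rV.ρ x1 x3 (pV.ρ a1 a2 v2)
  iden3 : ∀ a1 a2 x1 x2 v3, pV.ρ a1 a2 (rV.ρ x1 x2 v3) =
    rV.ρ (M.ψ.ρ a1 a2 x1) x2 v3 + rV.ρ x1 (M.ψ.ρ a1 a2 x2) v3 + rV.ρ x1 x2 (pV.ρ a1 a2 v3)
  iden4 : ∀ w1 w2 a1 a2 x1 x2 x3,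
    B w1 a2 (M.Lg.br x1 x2 x3) - B w2 a1 (M.Lg.br x1 x2 x3) =
      rV.ρ x2 x3 (B w1 a2 x1 - B w2 a1 x1) + rV.ρ x1 x3 (B w1 a2 x2 - B w2 a1 x2)
      + rV.ρ x1 x2 (B w1 a2 x3 - B w2 a1 x3)
  iden5 : ∀ x2 x3 a1 a2 v1, rV.ρ x2 (M.ψ.ρ a1 a2 x3) v1 = pV.ρ (M.ρ.ρ x2 x3 a2) a1 v1
  iden6 : ∀ x1 x3 a1 a2 v2, rV.ρ x1 (M.ψ.ρ a1 a2 x3) v2 = pV.ρ (M.ρ.ρ x1 x3 a2) a1 v2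
  iden7 : ∀ x1 x2 a1 a2 v3, rV.ρ x1 x2 (pV.ρ a1 a2 v3) = pV.ρ (M.ρ.ρ x1 x2 a1) a2 v3
  iden8 : ∀ x1 x2 x3 a1 a2 v1 v2 v3 w1 w2,
    rV.ρ x1 x2 (B w1 a2 x3 - B w2 a1 x3) =
      B (rW.ρ x2 x3 w2 + A v2 x3 a2 - A v3 x1 a2) a1 x1 - B w1 (M.ρ.ρ x2 x3 a2) x1
      - B (rW.ρ x1 x3 w2 + A v1 x3 a2 - A v3 x1 a2) a1 x2 + B w1 (M.ρ.ρ x1 x3 a2) x2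
      + B (rW.ρ x1 x2 w1 + A v1 x2 a1 - A v2 x1 a1) a2 x3 - B w2 (M.ρ.ρ x1 x2 a1) x3
  iden9 : ∀ x2 x3 a1 a2 v1, rV.ρ x2 x3 (pV.ρ a1 a2 v1) =
    pV.ρ a1 a2 (rV.ρ x2 x3 v1) + pV.ρ (M.ρ.ρ x2 x3 a1) a2 v1 + pV.ρ a1 (M.ρ.ρ x2 x3 a2) v1
  iden10 : ∀ x1 x2 x3 a1 a2 v2 v3 w1 w2,
    rV.ρ x2 x3 (B w1 a2 x1 - B w2 a1 x1) =
      (B w1 a2 (M.Lg.br x1 x2 x3) - B w2 a1 (M.Lg.br x1 x2 x3))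
      - B w2 (M.ρ.ρ x2 x3 a1) x1 + B w1 (M.ρ.ρ x2 x3 a2) x1
      + B (rW.ρ x2 x3 w1 + A v2 x3 a1 - A v3 x2 a1) a2 x1
      - B (rW.ρ x2 x2 w2 + A v2 x3 a2 - A v3 x2 a2) a1 x1
  iden11 : ∀ a1 a2 x1 x3 v2, rV.ρ (M.ψ.ρ a1 a2 x1) x3 v2 = pV.ρ a1 a2 (rV.ρ x1 x3 v2)
  iden12 : ∀ a1 a2 x1 x2 v3, rV.ρ (M.ψ.ρ a1 a2 x1) x2 v3 = pV.ρ a1 a2 (rV.ρ x1 x2 v3)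
  iden13 : ∀ x1 x2 a2 a3 w1, rW.ρ x1 x2 (pW.ρ a2 a3 w1) =
    pW.ρ (M.ρ.ρ x1 x2 a2) a3 w1 + pW.ρ a2 (M.ρ.ρ x1 x2 a3) w1 + pW.ρ a2 a3 (rW.ρ x1 x2 w1)
  iden14 : ∀ x1 x2 a1 a3 w2, rW.ρ x1 x2 (pW.ρ a1 a3 w2) =
    pW.ρ (M.ρ.ρ x1 x2 a1) a3 w2 + pW.ρ a1 (M.ρ.ρ x1 x2 a3) w2 + pW.ρ a1 a3 (rW.ρ x1 x2 w2)
  iden15 : ∀ x1 x2 a1 a2 w3, rW.ρ x1 x2 (pW.ρ a1 a2 w3) =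
    pW.ρ (M.ρ.ρ x1 x2 a1) a2 w3 + pW.ρ a1 (M.ρ.ρ x1 x2 a2) w3 + pW.ρ a1 a2 (rW.ρ x1 x2 w3)
  iden16 : ∀ v1 v2 x1 x2 a1 a2 a3,
    A v1 x2 (M.Lh.br a1 a2 a3) - A v2 x1 (M.Lh.br a1 a2 a3) =
      pW.ρ a2 a3 (A v1 x2 a1 - A v2 x1 a1) + pW.ρ a1 a3 (A v1 x1 a2 + A v2 x2 a2)
      + pW.ρ a1 a2 (A v1 x2 a3 - A v2 x1 a3)
  iden17 : ∀ a2 a3 x1 x2 w1, pW.ρ a2 (M.ρ.ρ x1 x2 a3) w1 = rW.ρ (M.ψ.ρ a2 a3 x2) x1 w1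
  iden18 : ∀ a1 a3 x1 x2 w2, pW.ρ a1 (M.ρ.ρ x1 x2 a3) w2 = rW.ρ (M.ψ.ρ a1 a3 x2) x1 w2
  iden19 : ∀ a1 a2 x1 x2 w3, pW.ρ a1 a2 (rW.ρ x1 x2 w3) = rW.ρ (M.ψ.ρ a1 a2 x1) x2 w3
  iden20 : ∀ a1 a2 a3 x1 x2 v1 v2 w1 w2 w3,
    pW.ρ a1 a2 (A v1 x2 a3 - A v2 x1 a3) =
      A (pV.ρ a2 a3 v2 + B w2 a3 x2 - B w3 a1 x2) x1 a1 - A v1 (M.ψ.ρ a2 a3 x2) a1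
      - A (pV.ρ a1 a3 v2 + B w1 a3 x2 - B w3 a1 x2) x1 a2 + A v1 (M.ψ.ρ a1 a3 x2) a2
      + A (pV.ρ a1 a2 v1 + B w1 a2 x1 - B w2 a1 x1) x2 a3 - A v2 (M.ψ.ρ a1 a2 x1) a3
  iden21 : ∀ a2 a3 x1 x2 w1, pW.ρ a2 a3 (rW.ρ x1 x2 w1) =
    rW.ρ x1 x2 (pW.ρ a2 a3 w1) + rW.ρ (M.ψ.ρ a2 a3 x1) x2 w1 + rW.ρ x1 (M.ψ.ρ a2 a3 x2) w1
  iden22 : ∀ a1 a2 a3 x1 x2 v1 v2 w2 w3,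
    pW.ρ a2 a3 (A v1 x2 a1 - A v2 x1 a1) =
      (A v1 x2 (M.Lh.br a1 a2 a3) - A v2 x1 (M.Lh.br a1 a2 a3))
      - A v2 (M.ψ.ρ a2 a3 x1) a1 + A v1 (M.ψ.ρ a2 a3 x2) a1
      + A (pV.ρ a2 a3 v1 + B w2 a3 x1 - B w3 a2 x1) x2 a1
      - A (pV.ρ a2 a2 v2 + B w2 a3 x2 - B w3 a2 x2) x1 a1
  iden23 : ∀ x1 x2 a1 a3 w2, pW.ρ (M.ρ.ρ x1 x2 a1) a3 w2 = rW.ρ x1 x2 (pW.ρ a1 a3 w2)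
  iden24 : ∀ x1 x2 a1 a2 w3, pW.ρ (M.ρ.ρ x1 x2 a1) a2 w3 = rW.ρ x1 x2 (pW.ρ a1 a2 w3)

/-- Forget the axioms of a matched-pair representation. -/
def MPRep.toData {M : MatchedPair k g h} (R : MPRep (V := V) (W := W) M) :
    MPRepData k g h V W :=
  ⟨R.rV.ρ, R.pV.ρ, R.rW.ρ, R.pW.ρ, R.A, R.B⟩

end MPRepSec

/-- The adjoint representation data of a matched pair on itself. -/
def adjData {k g h : Type*} [CommRing k] [AddCommGroup g] [Module k g]
    [AddCommGroup h] [Module k h] (M : MatchedPair k g h) : MPRepData k g h g h :=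
  ⟨M.Lg.br, M.ψ.ρ, M.ρ.ρ, M.Lh.br, M.ρ.ρ, M.ψ.ρ⟩
section CochainSec

variable (k : Type*) (g h V W : Type*) [CommRing k]
  [AddCommGroup g] [Module k g] [AddCommGroup h] [Module k h]
  [AddCommGroup V] [Module k V] [AddCommGroup W] [Module k W]

/-- A 2-cochain `(ω, θ, ν, φ)` of a matched pair of 3-Lie algebras with
coefficients in a pair of modules `(V, W)`. -/
structure Cochain2 where
  ω : g →ₗ[k] g →ₗ[k] g →ₗ[k] V
  θ : h →ₗ[k] h →ₗ[k] h →ₗ[k] W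
  ν : g →ₗ[k] g →ₗ[k] h →ₗ[k] W
  φ : h →ₗ[k] h →ₗ[k] g →ₗ[k] V
  ω_alt₁ : ∀ x y, ω x x y = 0
  ω_alt₂ : ∀ x y, ω x y y = 0
  θ_alt₁ : ∀ a b, θ a a b = 0
  θ_alt₂ : ∀ a b, θ a b b = 0
  ν_skew : ∀ x, ν x x = 0
  φ_skew : ∀ a, φ a a = 0

variable {k g h V W}

instance : Sub (Cochain2 k g h V W) :=
  ⟨fun c d =>
    { ω := c.ω - d.ω
      θ := c.θ - d.θ
      ν := c.ν - d.ν
      φ := c.φ - d.φ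
      ω_alt₁ := by intro x y; simp [c.ω_alt₁, d.ω_alt₁]
      ω_alt₂ := by intro x y; simp [c.ω_alt₂, d.ω_alt₂]
      θ_alt₁ := by intro a b; simp [c.θ_alt₁, d.θ_alt₁]
      θ_alt₂ := by intro a b; simp [c.θ_alt₂, d.θ_alt₂]
      ν_skew := by intro x; simp [c.ν_skew, d.ν_skew]
      φ_skew := by intro a; simp [c.φ_skew, d.φ_skew] }⟩

/-- The eight 2-cocycle identities (2co-1)–(2co-8) of arXiv:2508.14044, with
coefficients in a representation (data) `R` of the matched pair `M`. -/
def IsCocycle2 (M : MatchedPair k g h) (R : MPRepData k g h V W)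
    (c : Cochain2 k g h V W) : Prop :=
  (∀ x1 x2 x3 x4 x5 : g,
    R.ρV x4 x5 (c.ω x1 x2 x3) + R.ρV x5 x3 (c.ω x1 x2 x4) + R.ρV x3 x4 (c.ω x1 x2 x5)
    + c.ω (M.Lg.br x1 x2 x3) x4 x5 + c.ω x3 (M.Lg.br x1 x2 x4) x5
    + c.ω x3 x4 (M.Lg.br x1 x2 x5)
    - R.ρV x1 x2 (c.ω x3 x4 x5) - c.ω x1 x2 (M.Lg.br x3 x4 x5) = 0) ∧
  (∀ (x1 x2 : g) (a1 a2 a3 : h),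
    R.ψW a2 a3 (c.ν x1 x2 a1) + R.ψW a3 a1 (c.ν x1 x2 a2) + R.ψW a1 a2 (c.ν x1 x2 a3)
    + c.θ (M.ρ.ρ x1 x2 a1) a2 a3 + c.θ a1 (M.ρ.ρ x1 x2 a2) a3 + c.θ a1 a2 (M.ρ.ρ x1 x2 a3)
    - R.ρW x1 x2 (c.θ a1 a2 a3) - c.ν x1 x2 (M.Lh.br a1 a2 a3) = 0) ∧
  (∀ (a1 a2 : h) (x1 x2 x3 : g),
    R.ρV x2 x3 (c.φ a1 a2 x1) + R.ρV x3 x1 (c.φ a1 a2 x2) + R.ρV x1 x2 (c.φ a1 a2 x3)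
    + c.ω (M.ψ.ρ a1 a2 x1) x2 x3 + c.ω x1 (M.ψ.ρ a1 a2 x2) x3 + c.ω x1 x2 (M.ψ.ρ a1 a2 x3)
    - R.ψV a1 a2 (c.ω x1 x2 x3) - c.φ a1 a2 (M.Lg.br x1 x2 x3) = 0) ∧
  (∀ (x1 x2 x3 : g) (a1 a2 : h),
    R.B (c.ν x1 x3 a2) a1 x2 + c.φ (M.ρ.ρ x1 x3 a2) a1 x2
    - R.B (c.ν x2 x3 a2) a1 x1 - c.φ (M.ρ.ρ x2 x3 a2) a1 x1
    + R.ρV x1 x2 (c.φ a1 a2 x3) + c.ω x1 x2 (M.ψ.ρ a1 a2 x3)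
    - R.B (c.ν x1 x2 a1) a2 x3 - c.φ (M.ρ.ρ x1 x2 a1) a2 x3 = 0) ∧
  (∀ (a1 a2 a3 : h) (x1 x2 : g),
    R.A (c.φ a1 a3 x2) x1 a2 + c.ν (M.ψ.ρ a1 a3 x2) x1 a2
    - R.A (c.φ a2 a3 x2) x1 a1 - c.ν (M.ψ.ρ a2 a3 x2) x1 a1
    + R.ψW a1 a2 (c.ν x1 x2 a3) + c.θ a1 a2 (M.ρ.ρ x1 x2 a3)
    - R.A (c.φ a1 a2 x1) x2 a3 - c.ν (M.ψ.ρ a1 a2 x1) x2 a3 = 0) ∧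
  (∀ (a1 a2 : h) (x1 x2 x3 : g),
    R.ψV a1 a2 (c.ω x1 x2 x3) + c.φ a1 a2 (M.Lg.br x1 x2 x3)
    + c.φ (M.ρ.ρ x2 x3 a1) a2 x1 + R.B (c.ν x2 x3 a1) a2 x1
    + c.φ a1 (M.ρ.ρ x2 x3 a2) x1 - R.B (c.ν x2 x3 a2) a1 x1
    - c.ω (M.ψ.ρ a1 a2 x1) x2 x3 - R.ρV x2 x3 (c.φ a1 a2 x1) = 0) ∧
  (∀ (x1 x2 : g) (a1 a2 a3 : h),
    R.ρW x1 x2 (c.θ a1 a2 a3) + c.ν x1 x2 (M.Lh.br a1 a2 a3)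
    + c.ν (M.ψ.ρ a2 a3 x1) x2 a1 + R.A (c.φ a2 a3 x1) x2 a1
    + c.ν x1 (M.ψ.ρ a2 a3 x2) a1 - R.A (c.φ a2 a3 x2) x1 a1
    - c.θ (M.ρ.ρ x1 x2 a1) a2 a3 - R.ψW a2 a3 (c.ν x1 x2 a1) = 0) ∧
  (∀ a1 a2 a3 a4 a5 : h,
    R.ψW a4 a5 (c.θ a1 a2 a3) + R.ψW a5 a3 (c.θ a1 a2 a4) + R.ψW a3 a4 (c.θ a1 a2 a5)
    + c.θ (M.Lh.br a1 a2 a3) a4 a5 + c.θ a3 (M.Lh.br a1 a2 a4) a5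
    + c.θ a3 a4 (M.Lh.br a1 a2 a5)
    - R.ψW a1 a2 (c.θ a3 a4 a5) - c.θ a1 a2 (M.Lh.br a3 a4 a5) = 0)

/-- `c` is the image under the differential `D₁` of the 1-cochain `(N1, N2)`. -/
def IsD1 (M : MatchedPair k g h) (R : MPRepData k g h V W)
    (N1 : g →ₗ[k] V) (N2 : h →ₗ[k] W) (c : Cochain2 k g h V W) : Prop :=
  (∀ x1 x2 x3, c.ω x1 x2 x3 =
    R.ρV x2 x3 (N1 x1) + R.ρV x3 x1 (N1 x2) + R.ρV x1 x2 (N1 x3) - N1 (M.Lg.br x1 x2 x3)) ∧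
  (∀ x1 x2 a, c.ν x1 x2 a =
    R.ρW x1 x2 (N2 a) - N2 (M.ρ.ρ x1 x2 a) + R.A (N1 x1) x2 a - R.A (N1 x2) x1 a) ∧
  (∀ a1 a2 x, c.φ a1 a2 x =
    R.ψV a1 a2 (N1 x) - N1 (M.ψ.ρ a1 a2 x) + R.B (N2 a1) a2 x - R.B (N2 a2) a1 x) ∧
  (∀ a1 a2 a3, c.θ a1 a2 a3 =
    R.ψW a2 a3 (N2 a1) + R.ψW a3 a1 (N2 a2) + R.ψW a1 a2 (N2 a3) - N2 (M.Lh.br a1 a2 a3))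

/-- `c` is a 2-coboundary. -/
def IsCoboundary (M : MatchedPair k g h) (R : MPRepData k g h V W)
    (c : Cochain2 k g h V W) : Prop :=
  ∃ (N1 : g →ₗ[k] V) (N2 : h →ₗ[k] W), IsD1 M R N1 N2 c

/-- Two 2-cochains are cohomologous if their difference is a 2-coboundary. -/
def Cohomologous (M : MatchedPair k g h) (R : MPRepData k g h V W)
    (c c' : Cochain2 k g h V W) : Prop :=
  IsCoboundary M R (c - c')

/-- The 1-cocycle conditions `D₁(ζ, η) = 0`. -/
def IsCocycle1 (M : MatchedPair k g h) (R : MPRepData k g h V W)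
    (ζ : g →ₗ[k] V) (η : h →ₗ[k] W) : Prop :=
  (∀ x1 x2 x3,
    R.ρV x2 x3 (ζ x1) + R.ρV x3 x1 (ζ x2) + R.ρV x1 x2 (ζ x3) = ζ (M.Lg.br x1 x2 x3)) ∧
  (∀ x1 x2 a,
    R.ρW x1 x2 (η a) - η (M.ρ.ρ x1 x2 a) + R.A (ζ x1) x2 a - R.A (ζ x2) x1 a = 0) ∧
  (∀ a1 a2 x,
    R.ψV a1 a2 (ζ x) - ζ (M.ψ.ρ a1 a2 x) + R.B (η a1) a2 x - R.B (η a2) a1 x = 0) ∧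
  (∀ a1 a2 a3,
    R.ψW a2 a3 (η a1) + R.ψW a3 a1 (η a2) + R.ψW a1 a2 (η a3) = η (M.Lh.br a1 a2 a3))

/-- The second cohomology group of a matched pair of 3-Lie algebras (as a quotient
of 2-cocycles by the relation of being cohomologous). -/
def H2MPL (M : MatchedPair k g h) (R : MPRepData k g h V W) :=
  Quot (fun c c' : {c : Cochain2 k g h V W // IsCocycle2 M R c} =>
    Cohomologous M R c.1 c'.1)

end CochainSec

section DualSec

variable {k : Type*} [CommRing k] {g : Type*} [AddCommGroup g] [Module k g]

/-- The `k[t]/(t²)`-module structure on `g[t]/(t²) = g × g`, where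
`(a + b t) • (x₀ + x₁ t) = a • x₀ + (a • x₁ + b • x₀) t`. -/
instance dualNumberModule : Module (DualNumber k) (g × g) where
  smul r x := (r.fst • x.1, r.fst • x.2 + r.snd • x.1)
  one_smul x := by
    show ((1 : DualNumber k).fst • x.1, (1 : DualNumber k).fst • x.2
      + (1 : DualNumber k).snd • x.1) = x
    simp
  mul_smul r s x := by
    show ((r * s).fst • x.1, (r * s).fst • x.2 + (r * s).snd • x.1)
      = (r.fst • (s.fst • x.1),
         r.fst • (s.fst • x.2 + s.snd • x.1) + r.snd • (s.fst • x.1))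
    ext
    · simp [TrivSqZeroExt.fst_mul, mul_smul]
    · simp only [TrivSqZeroExt.snd_mul, smul_eq_mul, MulOpposite.smul_eq_mul_unop,
        MulOpposite.unop_op, add_smul, mul_smul, TrivSqZeroExt.fst_mul, smul_add]
      abel
  smul_zero r := by
    show ((r : DualNumber k).fst • (0 : g), r.fst • (0 : g) + r.snd • (0 : g)) = 0
    simp
  smul_add r x y := by
    show (r.fst • (x.1 + y.1), r.fst • (x.2 + y.2) + r.snd • (x.1 + y.1))
      = ((r.fst • x.1, r.fst • x.2 + r.snd • x.1)
        + (r.fst • y.1, r.fst • y.2 + r.snd • y.1))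
    ext <;> (simp [smul_add]; try abel)
  add_smul r s x := by
    show ((r + s).fst • x.1, (r + s).fst • x.2 + (r + s).snd • x.1)
      = ((r.fst • x.1, r.fst • x.2 + r.snd • x.1)
        + (s.fst • x.1, s.fst • x.2 + s.snd • x.1))
    ext <;> (simp [add_smul]; try abel)
  zero_smul x := by
    show ((0 : DualNumber k).fst • x.1, (0 : DualNumber k).fst • x.2
      + (0 : DualNumber k).snd • x.1) = 0
    simp

end DualSec

section DeformSec

variable {k g h : Type*} [CommRing k] [AddCommGroup g] [Module k g]
  [AddCommGroup h] [Module k h]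

/-- The `t`-linear extension of the deformed bracket `[·,·,·] + t ω` on `g[t]/(t²)`. -/
def defBrG (M : MatchedPair k g h) (c : Cochain2 k g h g h) :
    g × g → g × g → g × g → g × g := fun X Y Z =>
  (M.Lg.br X.1 Y.1 Z.1,
   c.ω X.1 Y.1 Z.1 + M.Lg.br X.2 Y.1 Z.1 + M.Lg.br X.1 Y.2 Z.1 + M.Lg.br X.1 Y.1 Z.2)

/-- The `t`-linear extension of the deformed bracket `[·,·,·] + t θ` on `h[t]/(t²)`. -/
def defBrH (M : MatchedPair k g h) (c : Cochain2 k g h g h) :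
    h × h → h × h → h × h → h × h := fun A B C =>
  (M.Lh.br A.1 B.1 C.1,
   c.θ A.1 B.1 C.1 + M.Lh.br A.2 B.1 C.1 + M.Lh.br A.1 B.2 C.1 + M.Lh.br A.1 B.1 C.2)

/-- The `t`-linear extension of the deformed action `ρ + t ν`. -/
def defRho (M : MatchedPair k g h) (c : Cochain2 k g h g h) :
    g × g → g × g → h × h → h × h := fun X Y A =>
  (M.ρ.ρ X.1 Y.1 A.1,
   c.ν X.1 Y.1 A.1 + M.ρ.ρ X.2 Y.1 A.1 + M.ρ.ρ X.1 Y.2 A.1 + M.ρ.ρ X.1 Y.1 A.2)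

/-- The `t`-linear extension of the deformed action `ψ + t φ`. -/
def defPsi (M : MatchedPair k g h) (c : Cochain2 k g h g h) :
    h × h → h × h → g × g → g × g := fun A B X =>
  (M.ψ.ρ A.1 B.1 X.1,
   c.φ A.1 B.1 X.1 + M.ψ.ρ A.2 B.1 X.1 + M.ψ.ρ A.1 B.2 X.1 + M.ψ.ρ A.1 B.1 X.2)

/-- `(ω, θ, ν, φ)` is an infinitesimal deformation of the matched pair `M`: the
`t`-linear extensions of the deformed structure maps make
`(g[t]/(t²), h[t]/(t²))` into a matched pair of 3-Lie algebras over `k[t]/(t²)`. -/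
def IsInfDeformation (M : MatchedPair k g h) (c : Cochain2 k g h g h) : Prop :=
  ∃ Mt : MatchedPair (DualNumber k) (g × g) (h × h),
    (∀ X Y Z, Mt.Lg.br X Y Z = defBrG M c X Y Z) ∧
    (∀ A B C, Mt.Lh.br A B C = defBrH M c A B C) ∧
    (∀ X Y A, Mt.ρ.ρ X Y A = defRho M c X Y A) ∧
    (∀ A B X, Mt.ψ.ρ A B X = defPsi M c A B X)

/-- The map `id + t f` on `g[t]/(t²)`. -/
def tMap (f : g →ₗ[k] g) : g × g → g × g := fun p => (p.1, p.2 + f p.1)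

/-- The pair `(id_g + t f, id_h + t g')` is a morphism of matched pairs over
`k[t]/(t²)` from the deformation `c` to the deformation `c'`. -/
def IsDeformMorphism (M : MatchedPair k g h) (c c' : Cochain2 k g h g h)
    (f : g →ₗ[k] g) (g' : h →ₗ[k] h) : Prop :=
  (∀ X Y Z, tMap f (defBrG M c X Y Z) = defBrG M c' (tMap f X) (tMap f Y) (tMap f Z)) ∧
  (∀ A B C, tMap g' (defBrH M c A B C) = defBrH M c' (tMap g' A) (tMap g' B) (tMap g' C)) ∧
  (∀ X Y A, tMap g' (defRho M c X Y A) = defRho M c' (tMap f X) (tMap f Y) (tMap g' A)) ∧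
  (∀ A B X, tMap f (defPsi M c A B X) = defPsi M c' (tMap g' A) (tMap g' B) (tMap f X))

/-- Equivalence of infinitesimal deformations. -/
def DeformEquiv (M : MatchedPair k g h) (c c' : Cochain2 k g h g h) : Prop :=
  ∃ (f : g →ₗ[k] g) (g' : h →ₗ[k] h), IsDeformMorphism M c c' f g'

end DeformSec

section ExtSec

variable (k : Type*) (g h V W ghat hhat : Type*) [CommRing k]
  [AddCommGroup g] [Module k g] [AddCommGroup h] [Module k h]
  [AddCommGroup V] [Module k V] [AddCommGroup W] [Module k W]
  [AddCommGroup ghat] [Module k ghat] [AddCommGroup hhat] [Module k hhat]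

/-- An abelian extension `0 → V ⋈ W → ĝ ⋈ ĥ → g ⋈ h → 0` of a matched pair of
3-Lie algebras `M` by the pair of modules `(V, W)` (with trivial structure). -/
structure AbelianExt (M : MatchedPair k g h) where
  Mhat : MatchedPair k ghat hhat
  i1 : V →ₗ[k] ghat
  i2 : W →ₗ[k] hhat
  j1 : ghat →ₗ[k] g
  j2 : hhat →ₗ[k] h
  i1_br : ∀ v1 v2 v3, Mhat.Lg.br (i1 v1) (i1 v2) (i1 v3) = 0
  i2_br : ∀ w1 w2 w3, Mhat.Lh.br (i2 w1) (i2 w2) (i2 w3) = 0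
  i_rho : ∀ v1 v2 w, Mhat.ρ.ρ (i1 v1) (i1 v2) (i2 w) = 0
  i_psi : ∀ w1 w2 v, Mhat.ψ.ρ (i2 w1) (i2 w2) (i1 v) = 0
  j1_br : ∀ X Y Z, j1 (Mhat.Lg.br X Y Z) = M.Lg.br (j1 X) (j1 Y) (j1 Z)
  j2_br : ∀ A B C, j2 (Mhat.Lh.br A B C) = M.Lh.br (j2 A) (j2 B) (j2 C)
  j_rho : ∀ X Y A, j2 (Mhat.ρ.ρ X Y A) = M.ρ.ρ (j1 X) (j1 Y) (j2 A)
  j_psi : ∀ A B X, j1 (Mhat.ψ.ρ A B X) = M.ψ.ρ (j2 A) (j2 B) (j1 X)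
  i1_inj : Function.Injective i1
  i2_inj : Function.Injective i2
  j1_surj : Function.Surjective j1
  j2_surj : Function.Surjective j2
  exact1 : ∀ X, j1 X = 0 ↔ ∃ v, i1 v = X
  exact2 : ∀ A, j2 A = 0 ↔ ∃ w, i2 w = A

variable {k g h V W ghat hhat}
variable {M : MatchedPair k g h}

/-- `(s1, s2)` is a section of `(j1, j2)`. -/
def IsSection (E : AbelianExt k g h V W ghat hhat M)
    (s1 : g →ₗ[k] ghat) (s2 : h →ₗ[k] hhat) : Prop :=
  (∀ x, E.j1 (s1 x) = x) ∧ (∀ a, E.j2 (s2 a) = a)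

/-- The representation data `R` on `(V, W)` is the one induced on the abelian
extension `E` (via any section, transported along the injections `i1, i2`). -/
def IsInducedRep (E : AbelianExt k g h V W ghat hhat M)
    (R : MPRepData k g h V W) : Prop :=
  ∀ s1 s2, IsSection E s1 s2 →
    (∀ x1 x2 v, E.i1 (R.ρV x1 x2 v) = E.Mhat.Lg.br (s1 x1) (s1 x2) (E.i1 v)) ∧
    (∀ x1 x2 w, E.i2 (R.ρW x1 x2 w) = E.Mhat.ρ.ρ (s1 x1) (s1 x2) (E.i2 w)) ∧
    (∀ a1 a2 v, E.i1 (R.ψV a1 a2 v) = E.Mhat.ψ.ρ (s2 a1) (s2 a2) (E.i1 v)) ∧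
    (∀ a1 a2 w, E.i2 (R.ψW a1 a2 w) = E.Mhat.Lh.br (s2 a1) (s2 a2) (E.i2 w)) ∧
    (∀ v x a, E.i2 (R.A v x a) = E.Mhat.ρ.ρ (E.i1 v) (s1 x) (s2 a)) ∧
    (∀ w a x, E.i1 (R.B w a x) = E.Mhat.ψ.ρ (E.i2 w) (s2 a) (s1 x))

/-- `c` is the 2-cocycle associated to the abelian extension `E` and the
section `(s1, s2)`. -/
def IsExtCocycle (E : AbelianExt k g h V W ghat hhat M)
    (s1 : g →ₗ[k] ghat) (s2 : h →ₗ[k] hhat) (c : Cochain2 k g h V W) : Prop :=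
  (∀ x1 x2 x3, E.i1 (c.ω x1 x2 x3) =
    E.Mhat.Lg.br (s1 x1) (s1 x2) (s1 x3) - s1 (M.Lg.br x1 x2 x3)) ∧
  (∀ a1 a2 a3, E.i2 (c.θ a1 a2 a3) =
    E.Mhat.Lh.br (s2 a1) (s2 a2) (s2 a3) - s2 (M.Lh.br a1 a2 a3)) ∧
  (∀ x1 x2 a, E.i2 (c.ν x1 x2 a) =
    E.Mhat.ρ.ρ (s1 x1) (s1 x2) (s2 a) - s2 (M.ρ.ρ x1 x2 a)) ∧
  (∀ a1 a2 x, E.i1 (c.φ a1 a2 x) =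
    E.Mhat.ψ.ρ (s2 a1) (s2 a2) (s1 x) - s1 (M.ψ.ρ a1 a2 x))

end ExtSec

section ExtIsoSec

variable {k g h V W ghat hhat ghat' hhat' : Type*} [CommRing k]
  [AddCommGroup g] [Module k g] [AddCommGroup h] [Module k h]
  [AddCommGroup V] [Module k V] [AddCommGroup W] [Module k W]
  [AddCommGroup ghat] [Module k ghat] [AddCommGroup hhat] [Module k hhat]
  [AddCommGroup ghat'] [Module k ghat'] [AddCommGroup hhat'] [Module k hhat']
  {M : MatchedPair k g h}

/-- `(f, gm)` is an isomorphism of abelian extensions from `E` to `E'`. -/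
def IsExtIso (E : AbelianExt k g h V W ghat hhat M)
    (E' : AbelianExt k g h V W ghat' hhat' M)
    (f : ghat →ₗ[k] ghat') (gm : hhat →ₗ[k] hhat') : Prop :=
  Function.Bijective f ∧ Function.Bijective gm ∧
  (∀ X Y Z, f (E.Mhat.Lg.br X Y Z) = E'.Mhat.Lg.br (f X) (f Y) (f Z)) ∧
  (∀ A B C, gm (E.Mhat.Lh.br A B C) = E'.Mhat.Lh.br (gm A) (gm B) (gm C)) ∧
  (∀ X Y A, gm (E.Mhat.ρ.ρ X Y A) = E'.Mhat.ρ.ρ (f X) (f Y) (gm A)) ∧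
  (∀ A B X, f (E.Mhat.ψ.ρ A B X) = E'.Mhat.ψ.ρ (gm A) (gm B) (f X)) ∧
  (∀ v, f (E.i1 v) = E'.i1 v) ∧ (∀ w, gm (E.i2 w) = E'.i2 w) ∧
  (∀ X, E'.j1 (f X) = E.j1 X) ∧ (∀ A, E'.j2 (gm A) = E.j2 A)

end ExtIsoSec

section AutSec

variable {k g h V W ghat hhat : Type*} [CommRing k]
  [AddCommGroup g] [Module k g] [AddCommGroup h] [Module k h]
  [AddCommGroup V] [Module k V] [AddCommGroup W] [Module k W]
  [AddCommGroup ghat] [Module k ghat] [AddCommGroup hhat] [Module k hhat]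

/-- `(f, gm)` is an automorphism of the matched pair `M` (as a pair of linear
equivalences preserving the brackets and actions). -/
def IsMPAut (M : MatchedPair k g h) (f : g ≃ₗ[k] g) (gm : h ≃ₗ[k] h) : Prop :=
  (∀ x y z, f (M.Lg.br x y z) = M.Lg.br (f x) (f y) (f z)) ∧
  (∀ a b c, gm (M.Lh.br a b c) = M.Lh.br (gm a) (gm b) (gm c)) ∧
  (∀ x y a, gm (M.ρ.ρ x y a) = M.ρ.ρ (f x) (f y) (gm a)) ∧
  (∀ a b x, f (M.ψ.ρ a b x) = M.ψ.ρ (gm a) (gm b) (f x))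

/-- A pair of (not necessarily invertible a priori) linear maps is an
automorphism of the matched pair `M`. -/
def IsMPAutMap (M : MatchedPair k g h) (f : g →ₗ[k] g) (gm : h →ₗ[k] h) : Prop :=
  Function.Bijective f ∧ Function.Bijective gm ∧
  (∀ x y z, f (M.Lg.br x y z) = M.Lg.br (f x) (f y) (f z)) ∧
  (∀ a b c, gm (M.Lh.br a b c) = M.Lh.br (gm a) (gm b) (gm c)) ∧
  (∀ x y a, gm (M.ρ.ρ x y a) = M.ρ.ρ (f x) (f y) (gm a)) ∧
  (∀ a b x, f (M.ψ.ρ a b x) = M.ψ.ρ (gm a) (gm b) (f x))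

variable {M : MatchedPair k g h}

/-- The pair `(α, β) = ((α1, α2), (β1, β2))` is inducible: it is the image under
`Φ` of an automorphism `(γ1, γ2)` of the extension preserving `(V, W)`. -/
def Inducible (E : AbelianExt k g h V W ghat hhat M)
    (s1 : g →ₗ[k] ghat) (s2 : h →ₗ[k] hhat)
    (α1 : g ≃ₗ[k] g) (α2 : h ≃ₗ[k] h) (β1 : V ≃ₗ[k] V) (β2 : W ≃ₗ[k] W) : Prop :=
  ∃ (γ1 : ghat ≃ₗ[k] ghat) (γ2 : hhat ≃ₗ[k] hhat),
    IsMPAut E.Mhat γ1 γ2 ∧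
    (∀ v, γ1 (E.i1 v) = E.i1 (β1 v)) ∧ (∀ w, γ2 (E.i2 w) = E.i2 (β2 w)) ∧
    (∀ x, E.j1 (γ1 (s1 x)) = α1 x) ∧ (∀ a, E.j2 (γ2 (s2 a)) = α2 a)

/-- The conditions (Iam1)–(Iam4) of Theorem 5.2 of arXiv:2508.14044 on the pair
of linear maps `(ζ, η)`. -/
def IamCond (M : MatchedPair k g h) (R : MPRepData k g h V W)
    (c : Cochain2 k g h V W)
    (α1 : g ≃ₗ[k] g) (α2 : h ≃ₗ[k] h) (β1 : V ≃ₗ[k] V) (β2 : W ≃ₗ[k] W)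
    (ζ : g →ₗ[k] V) (η : h →ₗ[k] W) : Prop :=
  (∀ x1 x2 x3, β1 (c.ω x1 x2 x3) - c.ω (α1 x1) (α1 x2) (α1 x3) =
      R.ρV (α1 x2) (α1 x3) (ζ x1) + R.ρV (α1 x3) (α1 x1) (ζ x2)
      + R.ρV (α1 x1) (α1 x2) (ζ x3) - ζ (M.Lg.br x1 x2 x3)) ∧
  (∀ a1 a2 a3, β2 (c.θ a1 a2 a3) - c.θ (α2 a1) (α2 a2) (α2 a3) =
      R.ψW (α2 a2) (α2 a3) (η a1) + R.ψW (α2 a3) (α2 a1) (η a2)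
      + R.ψW (α2 a1) (α2 a2) (η a3) - η (M.Lh.br a1 a2 a3)) ∧
  (∀ x1 x2 a, β2 (c.ν x1 x2 a) - c.ν (α1 x1) (α1 x2) (α2 a) =
      R.ρW (α1 x1) (α1 x2) (η a) - η (M.ρ.ρ x1 x2 a)
      + R.A (ζ x1) (α1 x2) (α2 a) - R.A (ζ x2) (α1 x1) (α2 a)) ∧
  (∀ a1 a2 x, β1 (c.φ a1 a2 x) - c.φ (α2 a1) (α2 a2) (α1 x) =
      R.ψV (α2 a1) (α2 a2) (ζ x) - ζ (M.ψ.ρ a1 a2 x)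
      + R.B (η a1) (α2 a2) (α1 x) - R.B (η a2) (α2 a1) (α1 x))

/-- The subgroup `C` of compatible pairs of automorphisms. -/
def InC (M : MatchedPair k g h) (R : MPRepData k g h V W) (c : Cochain2 k g h V W)
    (α1 : g ≃ₗ[k] g) (α2 : h ≃ₗ[k] h) (β1 : V ≃ₗ[k] V) (β2 : W ≃ₗ[k] W) : Prop :=
  ∃ (ζ : g →ₗ[k] V) (η : h →ₗ[k] W), IamCond M R c α1 α2 β1 β2 ζ η

/-- `c'` is the transform `(ω, θ, ν, φ)_{(α,β)}` of the 2-cochain `c` under the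
pair of automorphisms `(α, β)`. -/
def IsTransformed (c : Cochain2 k g h V W)
    (α1 : g ≃ₗ[k] g) (α2 : h ≃ₗ[k] h) (β1 : V ≃ₗ[k] V) (β2 : W ≃ₗ[k] W)
    (c' : Cochain2 k g h V W) : Prop :=
  (∀ x1 x2 x3, c'.ω x1 x2 x3 = β1 (c.ω (α1.symm x1) (α1.symm x2) (α1.symm x3))) ∧
  (∀ a1 a2 a3, c'.θ a1 a2 a3 = β2 (c.θ (α2.symm a1) (α2.symm a2) (α2.symm a3))) ∧
  (∀ x1 x2 a, c'.ν x1 x2 a = β2 (c.ν (α1.symm x1) (α1.symm x2) (α2.symm a))) ∧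
  (∀ a1 a2 x, c'.φ a1 a2 x = β1 (c.φ (α2.symm a1) (α2.symm a2) (α1.symm x)))

end AutSec

/-- The class of a 2-cocycle in the second cohomology group. -/
def H2MPL.mk {k g h V W : Type*} [CommRing k]
    [AddCommGroup g] [Module k g] [AddCommGroup h] [Module k h]
    [AddCommGroup V] [Module k V] [AddCommGroup W] [Module k W]
    (M : MatchedPair k g h) (R : MPRepData k g h V W)
    (c : {c : Cochain2 k g h V W // IsCocycle2 M R c}) : H2MPL M R :=
  Quot.mk _ c
section ThreeLieHelpers

variable {k : Type*} [CommRing k] {g V : Type*} [AddCommGroup g] [Module k g]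
  [AddCommGroup V] [Module k V]

lemma ThreeLie.anti12 (L : ThreeLie k g) (x y z : g) : L.br x y z = - L.br y x z := by
  have h := L.alt₁ (x + y) z
  simp only [map_add, LinearMap.add_apply, L.alt₁, zero_add, add_zero] at h
  linear_combination (norm := module) h

lemma ThreeLie.anti23 (L : ThreeLie k g) (x y z : g) : L.br x y z = - L.br x z y := by
  have h := L.alt₂ x (y + z)
  simp only [map_add, LinearMap.add_apply, L.alt₂, zero_add, add_zero] at h
  linear_combination (norm := module) h

lemma ThreeLie.cyc (L : ThreeLie k g) (x y z : g) : L.br x y z = L.br y z x := by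
  have h1 := L.anti12 x y z
  have h2 := L.anti23 y x z
  linear_combination (norm := module) h1 - h2

lemma ThreeLie.cyc' (L : ThreeLie k g) (x y z : g) : L.br x y z = L.br z x y := by
  rw [L.cyc, L.cyc]

lemma Rep3.skew_apply {L : ThreeLie k g} (R3 : Rep3 k g V L) (x : g) (v : V) :
    R3.ρ x x v = 0 := by
  rw [R3.skew]; rfl

lemma Rep3.anti {L : ThreeLie k g} (R3 : Rep3 k g V L) (x y : g) (v : V) :
    R3.ρ x y v = - R3.ρ y x v := by
  have h := R3.skew_apply (x + y) v
  simp only [map_add, LinearMap.add_apply, R3.skew_apply, zero_add, add_zero] at h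
  linear_combination (norm := module) h

/-- The flipped variant of `rep2`, matching the cyclic pattern of cocycle identities. -/
lemma Rep3.rep2' {L : ThreeLie k g} (R3 : Rep3 k g V L) (y z1 z2 z3 : g) (v : V) :
    R3.ρ z2 z3 (R3.ρ y z1 v) + R3.ρ z3 z1 (R3.ρ y z2 v) + R3.ρ z1 z2 (R3.ρ y z3 v)
      = R3.ρ y (L.br z1 z2 z3) v := by
  have h := R3.rep2 z1 z2 z3 y v
  rw [show R3.ρ z3 y v = - R3.ρ y z3 v from R3.anti .. ,
      show R3.ρ z1 y v = - R3.ρ y z1 v from R3.anti .. ,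
      show R3.ρ z2 y v = - R3.ρ y z2 v from R3.anti .. ,
      show R3.ρ (L.br z1 z2 z3) y v = - R3.ρ y (L.br z1 z2 z3) v from R3.anti ..] at h
  simp only [map_neg] at h
  linear_combination (norm := module) h

end ThreeLieHelpers

section Degeneracy

variable {k : Type*} [CommRing k] {g h V W : Type*}
  [AddCommGroup g] [Module k g] [AddCommGroup h] [Module k h]
  [AddCommGroup V] [Module k V] [AddCommGroup W] [Module k W]
  {M : MatchedPair k g h} (R : MPRep (V := V) (W := W) M)

lemma MPRep.lBA (v : V) (x : g) (a b : h) (y : g) : R.B (R.A v x a) b y = 0 := by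
  have h1 := R.iden8 x y 0 b a 0 0 v 0 0
  have h2 := R.iden8 x 0 0 b a 0 0 v 0 0
  simp only [map_zero, LinearMap.zero_apply, zero_add, add_zero, sub_zero, zero_sub,
    map_neg, LinearMap.neg_apply, map_sub, sub_self, neg_zero] at h1 h2
  linear_combination (norm := module) h2 - h1

lemma MPRep.lBrW (x y : g) (w : W) (a : h) (z : g) : R.B (R.rW.ρ x y w) a z = 0 := by
  have h1 := R.iden10 z x y 0 a 0 0 w 0
  have h2 := R.iden10 z x y a 0 0 0 0 w
  simp only [map_zero, LinearMap.zero_apply, zero_add, add_zero, sub_zero, zero_sub,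
    map_neg, LinearMap.neg_apply, map_sub, sub_self, neg_zero, Rep3.skew_apply] at h1 h2
  linear_combination (norm := module) (-h1) - h2

lemma MPRep.lrVB (x y : g) (w : W) (a : h) (z : g) :
    R.rV.ρ x y (R.B w a z) = R.B w (M.ρ.ρ x y a) z := by
  have h := R.iden8 x y z a 0 0 0 0 0 w
  simp only [map_zero, LinearMap.zero_apply, zero_add, add_zero, sub_zero, zero_sub,
    map_neg, LinearMap.neg_apply, map_sub, sub_self, neg_zero] at h
  linear_combination (norm := module) (-h) - R.lBrW y z w a x + R.lBrW x z w a y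

lemma MPRep.lBbr (w : W) (a : h) (x y z : g) : R.B w a (M.Lg.br x y z) = 0 := by
  have h := R.iden10 x y z a 0 0 0 0 w
  simp only [map_zero, LinearMap.zero_apply, zero_add, add_zero, sub_zero, zero_sub,
    map_neg, LinearMap.neg_apply, map_sub, sub_self, neg_zero, Rep3.skew_apply] at h
  have h' := R.lrVB y z w a x
  linear_combination (norm := module) h + h'

lemma MPRep.lBflip (w : W) (y z : g) (a : h) (x : g) :
    R.B w (M.ρ.ρ y z a) x = - R.B w (M.ρ.ρ z y a) x := by
  rw [M.ρ.anti y z a, map_neg, LinearMap.neg_apply]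

lemma MPRep.lBρcyc (w : W) (a : h) (x1 x2 x3 : g) :
    R.B w (M.ρ.ρ x2 x3 a) x1 + R.B w (M.ρ.ρ x3 x1 a) x2 + R.B w (M.ρ.ρ x1 x2 a) x3 = 0 := by
  have h := R.iden8 x1 x2 x3 0 a 0 0 0 w 0
  simp only [map_zero, LinearMap.zero_apply, zero_add, add_zero, sub_zero, zero_sub,
    map_neg, LinearMap.neg_apply, map_sub, sub_self, neg_zero] at h
  have h2 := R.lrVB x1 x2 w a x3
  have i3 := R.lBrW x1 x2 w a x3
  have fl := R.lBflip w x3 x1 a x2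
  linear_combination (norm := module) h - h2 + i3 + fl

lemma MPRep.lpWA (b c : h) (v : V) (x : g) (a : h) : R.pW.ρ b c (R.A v x a) = 0 := by
  have h1 := R.iden16 v 0 x 0 b a c
  simp only [map_zero, LinearMap.zero_apply, zero_add, add_zero, sub_zero, zero_sub,
    map_neg, LinearMap.neg_apply, map_sub, sub_self, neg_zero] at h1
  linear_combination (norm := module) -h1

lemma MPRep.lAbrh (v : V) (x : g) (a b c : h) : R.A v x (M.Lh.br a b c) = 0 := by
  have h := R.iden16 0 v x 0 a b c
  simp only [map_zero, LinearMap.zero_apply, zero_add, add_zero, sub_zero, zero_sub,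
    map_neg, LinearMap.neg_apply, map_sub, sub_self, neg_zero, MPRep.lpWA] at h
  linear_combination (norm := module) -h

lemma MPRep.lAB (w : W) (a : h) (y x : g) (b : h) : R.A (R.B w a y) x b = 0 := by
  have h1 := R.iden20 a b 0 x y 0 0 0 0 w
  have h2 := R.iden20 a 0 0 x y 0 0 0 0 w
  simp only [map_zero, LinearMap.zero_apply, zero_add, add_zero, sub_zero, zero_sub,
    map_neg, LinearMap.neg_apply, map_sub, sub_self, neg_zero, MPRep.lpWA] at h1 h2
  linear_combination (norm := module) h2 - h1

lemma MPRep.lAψ (v : V) (b c : h) (x : g) (a : h) : R.A v (M.ψ.ρ b c x) a = 0 := by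
  have h := R.iden22 a b c x 0 0 v 0 0
  simp only [map_zero, LinearMap.zero_apply, zero_add, add_zero, sub_zero, zero_sub,
    map_neg, LinearMap.neg_apply, map_sub, sub_self, neg_zero, MPRep.lpWA, MPRep.lAbrh,
    MPRep.lAB, Rep3.skew_apply] at h
  linear_combination (norm := module) h

lemma MPRep.lApV (b c : h) (v : V) (x : g) (a : h) : R.A (R.pV.ρ b c v) x a = 0 := by
  have h := R.iden22 a b c 0 x v 0 0 0
  simp only [map_zero, LinearMap.zero_apply, zero_add, add_zero, sub_zero, zero_sub,
    map_neg, LinearMap.neg_apply, map_sub, sub_self, neg_zero, MPRep.lpWA, MPRep.lAbrh,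
    MPRep.lAB, MPRep.lAψ, Rep3.skew_apply] at h
  linear_combination (norm := module) -h

lemma MPRep.lDη (x y : g) (a b : h) (w : W) :
    R.rW.ρ x y (R.pW.ρ a b w) + R.pW.ρ a b (R.rW.ρ x y w) = 0 := by
  have h21 := R.iden21 a b x y w
  have h19a := R.iden19 a b x y w
  have h19b := R.iden19 a b y x w
  have e : R.pW.ρ a b (R.rW.ρ y x w) = - R.pW.ρ a b (R.rW.ρ x y w) := by
    rw [R.rW.anti y x w, map_neg]
  have e2 : R.rW.ρ x (M.ψ.ρ a b y) w = - R.rW.ρ (M.ψ.ρ a b y) x w :=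
    R.rW.anti x (M.ψ.ρ a b y) w
  linear_combination (norm := module) (-h21) + h19a - h19b + e - e2

lemma MPRep.lDpr (x y : g) (a b : h) (w : W) :
    R.pW.ρ a (M.ρ.ρ x y b) w = - R.pW.ρ a b (R.rW.ρ x y w) := by
  have h13 := R.iden13 x y a b w
  have h23 := R.iden23 x y a b w
  linear_combination (norm := module) (-h13) - h23

end Degeneracy

section LemmaA
set_option maxHeartbeats 1600000

variable {k : Type*} [CommRing k] {g h V W ghat hhat : Type*}
  [AddCommGroup g] [Module k g] [AddCommGroup h] [Module k h]
  [AddCommGroup V] [Module k V] [AddCommGroup W] [Module k W]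
  [AddCommGroup ghat] [Module k ghat] [AddCommGroup hhat] [Module k hhat]

lemma extCocycle_isCocycle2 {M : MatchedPair k g h}
    (E : AbelianExt k g h V W ghat hhat M)
    (s1 : g →ₗ[k] ghat) (s2 : h →ₗ[k] hhat) (hs : IsSection E s1 s2)
    (R : MPRepData k g h V W) (hR : IsInducedRep E R)
    (c : Cochain2 k g h V W) (hc : IsExtCocycle E s1 s2 c) :
    IsCocycle2 M R c := by
  obtain ⟨hρV, hρW, hψV, hψW, hA, hB⟩ := hR s1 s2 hs
  obtain ⟨hω, hθ, hν, hφ⟩ := hc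
  refine ⟨?_, ?_, ?_, ?_, ?_, ?_, ?_, ?_⟩
  · -- 2co-1
    intro x1 x2 x3 x4 x5
    apply E.i1_inj
    simp only [map_zero, map_add, map_sub, hρV, hω,
      LinearMap.add_apply, LinearMap.sub_apply]
    have e1 := E.Mhat.Lg.fund (s1 x1) (s1 x2) (s1 x3) (s1 x4) (s1 x5)
    have e2 := congrArg s1 (M.Lg.fund x1 x2 x3 x4 x5)
    simp only [map_add] at e2
    have c1 := E.Mhat.Lg.cyc' (s1 x4) (s1 x5)
      (E.Mhat.Lg.br (s1 x1) (s1 x2) (s1 x3))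
    have c2 := E.Mhat.Lg.cyc' (s1 x3)
      (E.Mhat.Lg.br (s1 x1) (s1 x2) (s1 x4)) (s1 x5)
    have c3 := E.Mhat.Lg.cyc' (s1 x4) (s1 x5) (s1 (M.Lg.br x1 x2 x3))
    have c4 := E.Mhat.Lg.cyc' (s1 x3) (s1 (M.Lg.br x1 x2 x4)) (s1 x5)
    linear_combination (norm := module) (-e1) + e2 + c1 - c2 - c3 + c4
  · -- 2co-2
    intro x1 x2 a1 a2 a3
    apply E.i2_inj
    simp only [map_zero, map_add, map_sub, hψW, hρW, hθ, hν,
      LinearMap.add_apply, LinearMap.sub_apply]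
    have e1 := E.Mhat.mp4 (s1 x1) (s1 x2) (s2 a1) (s2 a2) (s2 a3)
    have e2 := congrArg s2 (M.mp4 x1 x2 a1 a2 a3)
    simp only [map_add] at e2
    have d1 := E.Mhat.Lh.cyc' (s2 a2) (s2 a3)
      (E.Mhat.ρ.ρ (s1 x1) (s1 x2) (s2 a1))
    have d2 := E.Mhat.Lh.cyc (s2 a3) (s2 a1)
      (E.Mhat.ρ.ρ (s1 x1) (s1 x2) (s2 a2))
    have d3 := E.Mhat.Lh.cyc' (s2 a2) (s2 a3) (s2 (M.ρ.ρ x1 x2 a1))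
    have d4 := E.Mhat.Lh.cyc (s2 a3) (s2 a1) (s2 (M.ρ.ρ x1 x2 a2))
    linear_combination (norm := module) (-e1) + e2 + d1 + d2 - d3 - d4
  · -- 2co-3
    intro a1 a2 x1 x2 x3
    apply E.i1_inj
    simp only [map_zero, map_add, map_sub, hρV, hψV, hω, hφ,
      LinearMap.add_apply, LinearMap.sub_apply]
    have e1 := E.Mhat.mp1 (s2 a1) (s2 a2) (s1 x1) (s1 x2) (s1 x3)
    have e2 := congrArg s1 (M.mp1 a1 a2 x1 x2 x3)
    simp only [map_add] at e2
    have d1 := E.Mhat.Lg.cyc' (s1 x2) (s1 x3)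
      (E.Mhat.ψ.ρ (s2 a1) (s2 a2) (s1 x1))
    have d2 := E.Mhat.Lg.cyc (s1 x3) (s1 x1)
      (E.Mhat.ψ.ρ (s2 a1) (s2 a2) (s1 x2))
    have d3 := E.Mhat.Lg.cyc' (s1 x2) (s1 x3) (s1 (M.ψ.ρ a1 a2 x1))
    have d4 := E.Mhat.Lg.cyc (s1 x3) (s1 x1) (s1 (M.ψ.ρ a1 a2 x2))
    linear_combination (norm := module) (-e1) + e2 + d1 + d2 - d3 - d4
  · -- 2co-4
    intro x1 x2 x3 a1 a2
    apply E.i1_inj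
    simp only [map_zero, map_add, map_sub, hρV, hω, hφ, hν, hB,
      LinearMap.add_apply, LinearMap.sub_apply]
    have e1 := E.Mhat.mp2 (s1 x1) (s1 x2) (s1 x3) (s2 a1) (s2 a2)
    have e2 := congrArg s1 (M.mp2 x1 x2 x3 a1 a2)
    simp only [map_add, map_sub] at e2
    linear_combination (norm := module) (-e1) + e2
  · -- 2co-5
    intro a1 a2 a3 x1 x2
    apply E.i2_inj
    simp only [map_zero, map_add, map_sub, hψW, hθ, hν, hφ, hA,
      LinearMap.add_apply, LinearMap.sub_apply]
    have e1 := E.Mhat.mp5 (s2 a1) (s2 a2) (s2 a3) (s1 x1) (s1 x2)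
    have e2 := congrArg s2 (M.mp5 a1 a2 a3 x1 x2)
    simp only [map_add, map_sub] at e2
    linear_combination (norm := module) (-e1) + e2
  · -- 2co-6
    intro a1 a2 x1 x2 x3
    apply E.i1_inj
    simp only [map_zero, map_add, map_sub, hρV, hψV, hω, hφ, hν, hB,
      LinearMap.add_apply, LinearMap.sub_apply]
    have e1 := E.Mhat.mp3 (s2 a1) (s2 a2) (s1 x1) (s1 x2) (s1 x3)
    have e2 := congrArg s1 (M.mp3 a1 a2 x1 x2 x3)
    simp only [map_add] at e2
    have d1 := E.Mhat.ψ.anti (s2 a1) (s2 (M.ρ.ρ x2 x3 a2)) (s1 x1)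
    have d2 := E.Mhat.ψ.anti (E.Mhat.ρ.ρ (s1 x2) (s1 x3) (s2 a2)) (s2 a1) (s1 x1)
    have d3 := E.Mhat.Lg.cyc' (s1 x2) (s1 x3) (s1 (M.ψ.ρ a1 a2 x1))
    have d4 := E.Mhat.Lg.cyc' (s1 x2) (s1 x3)
      (E.Mhat.ψ.ρ (s2 a1) (s2 a2) (s1 x1))
    linear_combination (norm := module) (-e1) + e2 + d1 - d2 + d3 - d4
  · -- 2co-7
    intro x1 x2 a1 a2 a3
    apply E.i2_inj
    simp only [map_zero, map_add, map_sub, hρW, hψW, hθ, hν, hφ, hA,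
      LinearMap.add_apply, LinearMap.sub_apply]
    have e1 := E.Mhat.mp6 (s1 x1) (s1 x2) (s2 a1) (s2 a2) (s2 a3)
    have e2 := congrArg s2 (M.mp6 x1 x2 a1 a2 a3)
    simp only [map_add] at e2
    have d1 := E.Mhat.ρ.anti (s1 x1) (s1 (M.ψ.ρ a2 a3 x2)) (s2 a1)
    have d2 := E.Mhat.ρ.anti (E.Mhat.ψ.ρ (s2 a2) (s2 a3) (s1 x2)) (s1 x1) (s2 a1)
    have d3 := E.Mhat.Lh.cyc' (s2 a2) (s2 a3) (s2 (M.ρ.ρ x1 x2 a1))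
    have d4 := E.Mhat.Lh.cyc' (s2 a2) (s2 a3)
      (E.Mhat.ρ.ρ (s1 x1) (s1 x2) (s2 a1))
    linear_combination (norm := module) (-e1) + e2 + d1 - d2 + d3 - d4
  · -- 2co-8
    intro a1 a2 a3 a4 a5
    apply E.i2_inj
    simp only [map_zero, map_add, map_sub, hψW, hθ,
      LinearMap.add_apply, LinearMap.sub_apply]
    have e1 := E.Mhat.Lh.fund (s2 a1) (s2 a2) (s2 a3) (s2 a4) (s2 a5)
    have e2 := congrArg s2 (M.Lh.fund a1 a2 a3 a4 a5)
    simp only [map_add] at e2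
    have c1 := E.Mhat.Lh.cyc' (s2 a4) (s2 a5)
      (E.Mhat.Lh.br (s2 a1) (s2 a2) (s2 a3))
    have c2 := E.Mhat.Lh.cyc' (s2 a3)
      (E.Mhat.Lh.br (s2 a1) (s2 a2) (s2 a4)) (s2 a5)
    have c3 := E.Mhat.Lh.cyc' (s2 a4) (s2 a5) (s2 (M.Lh.br a1 a2 a3))
    have c4 := E.Mhat.Lh.cyc' (s2 a3) (s2 (M.Lh.br a1 a2 a4)) (s2 a5)
    linear_combination (norm := module) (-e1) + e2 + c1 - c2 - c3 + c4
end LemmaA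

section LemmaB

variable {k : Type*} [CommRing k] {g h V W : Type*}
  [AddCommGroup g] [Module k g] [AddCommGroup h] [Module k h]
  [AddCommGroup V] [Module k V] [AddCommGroup W] [Module k W]

set_option maxHeartbeats 8000000

lemma isCocycle2_add_d1 {M : MatchedPair k g h} (R : MPRep (V := V) (W := W) M)
    (c e : Cochain2 k g h V W) (hcc : IsCocycle2 M R.toData c)
    (N1 : g →ₗ[k] V) (N2 : h →ₗ[k] W)
    (heω : ∀ x1 x2 x3, e.ω x1 x2 x3 = c.ω x1 x2 x3 + R.rV.ρ x2 x3 (N1 x1)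
      + R.rV.ρ x3 x1 (N1 x2) + R.rV.ρ x1 x2 (N1 x3) - N1 (M.Lg.br x1 x2 x3))
    (heν : ∀ x1 x2 a, e.ν x1 x2 a = c.ν x1 x2 a + R.rW.ρ x1 x2 (N2 a)
      - N2 (M.ρ.ρ x1 x2 a) + R.A (N1 x1) x2 a - R.A (N1 x2) x1 a)
    (heφ : ∀ a1 a2 x, e.φ a1 a2 x = c.φ a1 a2 x + R.pV.ρ a1 a2 (N1 x)
      - N1 (M.ψ.ρ a1 a2 x) + R.B (N2 a1) a2 x - R.B (N2 a2) a1 x)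
    (heθ : ∀ a1 a2 a3, e.θ a1 a2 a3 = c.θ a1 a2 a3 + R.pW.ρ a2 a3 (N2 a1)
      + R.pW.ρ a3 a1 (N2 a2) + R.pW.ρ a1 a2 (N2 a3) - N2 (M.Lh.br a1 a2 a3)) :
    IsCocycle2 M R.toData e := by
  refine ⟨?_, ?_, ?_, ?_, ?_, ?_, ?_, ?_⟩
  · -- 2co-1
    intro x1 x2 x3 x4 x5
    have hc1 := hcc.1 x1 x2 x3 x4 x5
    simp only [MPRep.toData] at hc1 ⊢
    simp only [heω, map_add, map_sub, LinearMap.add_apply, LinearMap.sub_apply]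
    have E1 := R.rV.rep2' x2 x3 x4 x5 (N1 x1)
    have E2 := R.rV.rep2 x3 x4 x5 x1 (N1 x2)
    have E3 := R.rV.rep1 x1 x2 x4 x5 (N1 x3)
    have E4 := R.rV.rep1 x1 x2 x5 x3 (N1 x4)
    have E5 := R.rV.rep1 x1 x2 x3 x4 (N1 x5)
    have EN := congrArg N1 (M.Lg.fund x1 x2 x3 x4 x5)
    simp only [map_add] at EN
    linear_combination (norm := module) hc1 + E1 - E2 - E3 - E4 - E5 + EN
  · -- 2co-2
    intro x1 x2 a1 a2 a3
    have hc2 := hcc.2.1 x1 x2 a1 a2 a3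
    simp only [MPRep.toData] at hc2 ⊢
    simp only [heν, heθ, map_add, map_sub, LinearMap.add_apply, LinearMap.sub_apply]
    have F1 := R.iden13 x1 x2 a2 a3 (N2 a1)
    have F2 := R.iden13 x1 x2 a3 a1 (N2 a2)
    have F3 := R.iden13 x1 x2 a1 a2 (N2 a3)
    have Em := congrArg N2 (M.mp4 x1 x2 a1 a2 a3)
    simp only [map_add] at Em
    have P1 := R.lpWA a2 a3 (N1 x1) x2 a1
    have P2 := R.lpWA a2 a3 (N1 x2) x1 a1
    have P3 := R.lpWA a3 a1 (N1 x1) x2 a2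
    have P4 := R.lpWA a3 a1 (N1 x2) x1 a2
    have P5 := R.lpWA a1 a2 (N1 x1) x2 a3
    have P6 := R.lpWA a1 a2 (N1 x2) x1 a3
    have Q1 := R.lAbrh (N1 x1) x2 a1 a2 a3
    have Q2 := R.lAbrh (N1 x2) x1 a1 a2 a3
    linear_combination (norm := module) hc2 - F1 - F2 - F3 + Em
      + P1 - P2 + P3 - P4 + P5 - P6 - Q1 + Q2
  · -- 2co-3
    intro a1 a2 x1 x2 x3
    have hc3 := hcc.2.2.1 a1 a2 x1 x2 x3
    simp only [MPRep.toData] at hc3 ⊢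
    simp only [heω, heφ, map_add, map_sub, LinearMap.add_apply, LinearMap.sub_apply]
    have I1 := R.iden1 a1 a2 x2 x3 (N1 x1)
    have I2 := R.iden1 a1 a2 x3 x1 (N1 x2)
    have I3 := R.iden1 a1 a2 x1 x2 (N1 x3)
    have Em := congrArg N1 (M.mp1 a1 a2 x1 x2 x3)
    simp only [map_add] at Em
    have rvb1 := R.lrVB x2 x3 (N2 a1) a2 x1
    have rvb2 := R.lrVB x2 x3 (N2 a2) a1 x1
    have rvb3 := R.lrVB x3 x1 (N2 a1) a2 x2
    have rvb4 := R.lrVB x3 x1 (N2 a2) a1 x2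
    have rvb5 := R.lrVB x1 x2 (N2 a1) a2 x3
    have rvb6 := R.lrVB x1 x2 (N2 a2) a1 x3
    have bc1 := R.lBρcyc (N2 a1) a2 x1 x2 x3
    have bc2 := R.lBρcyc (N2 a2) a1 x1 x2 x3
    have bbr1 := R.lBbr (N2 a1) a2 x1 x2 x3
    have bbr2 := R.lBbr (N2 a2) a1 x1 x2 x3
    linear_combination (norm := module) hc3 - I1 - I2 - I3 + Em
      + rvb1 - rvb2 + rvb3 - rvb4 + rvb5 - rvb6 + bc1 - bc2 - bbr1 + bbr2
  · -- 2co-4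
    intro x1 x2 x3 a1 a2
    have hc4 := hcc.2.2.2.1 x1 x2 x3 a1 a2
    simp only [MPRep.toData] at hc4 ⊢
    simp only [heω, heν, heφ, map_add, map_sub, LinearMap.add_apply, LinearMap.sub_apply]
    have i7 := R.iden7 x1 x2 a1 a2 (N1 x3)
    have i6 := R.iden6 x1 x3 a1 a2 (N1 x2)
    have AN1 := R.rV.anti (M.ψ.ρ a1 a2 x3) x1 (N1 x2)
    have i5 := R.iden5 x2 x3 a1 a2 (N1 x1)
    have Em := congrArg N1 (M.mp2 x1 x2 x3 a1 a2)
    simp only [map_add, map_sub] at Em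
    have rvba := R.lrVB x1 x2 (N2 a1) a2 x3
    have rvbb := R.lrVB x1 x2 (N2 a2) a1 x3
    have bc1 := R.lBρcyc (N2 a1) a2 x1 x2 x3
    have bf := R.lBflip (N2 a1) x3 x1 a2 x2
    have Z1 := R.lBrW x1 x3 (N2 a2) a1 x2
    have Z2 := R.lBA (N1 x1) x3 a2 a1 x2
    have Z3 := R.lBA (N1 x3) x1 a2 a1 x2
    have Z4 := R.lBrW x2 x3 (N2 a2) a1 x1
    have Z5 := R.lBA (N1 x2) x3 a2 a1 x1
    have Z6 := R.lBA (N1 x3) x2 a2 a1 x1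
    have Z7 := R.lBrW x1 x2 (N2 a1) a2 x3
    have Z8 := R.lBA (N1 x1) x2 a1 a2 x3
    have Z9 := R.lBA (N1 x2) x1 a1 a2 x3
    linear_combination (norm := module) hc4 + i7 - i6 + AN1 + i5 + Em
      + rvba - rvbb + bc1 - bf + Z1 + Z2 - Z3 - Z4 - Z5 + Z6 - Z7 - Z8 + Z9
  · -- 2co-5
    intro a1 a2 a3 x1 x2
    have hc5 := hcc.2.2.2.2.1 a1 a2 a3 x1 x2
    simp only [MPRep.toData] at hc5 ⊢
    simp only [heθ, heν, heφ, map_add, map_sub, LinearMap.add_apply, LinearMap.sub_apply]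
    have i19 := R.iden19 a1 a2 x1 x2 (N2 a3)
    have i18 := R.iden18 a1 a3 x1 x2 (N2 a2)
    have AN := R.pW.anti (M.ρ.ρ x1 x2 a3) a1 (N2 a2)
    have i17 := R.iden17 a2 a3 x1 x2 (N2 a1)
    have Em := congrArg N2 (M.mp5 a1 a2 a3 x1 x2)
    simp only [map_add, map_sub] at Em
    have Y1 := R.lApV a1 a3 (N1 x2) x1 a2
    have Y2 := R.lAψ (N1 x1) a1 a3 x2 a2
    have Y3 := R.lAB (N2 a1) a3 x2 x1 a2
    have Y4 := R.lAB (N2 a3) a1 x2 x1 a2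
    have Y5 := R.lApV a2 a3 (N1 x2) x1 a1
    have Y6 := R.lAψ (N1 x1) a2 a3 x2 a1
    have Y7 := R.lAB (N2 a2) a3 x2 x1 a1
    have Y8 := R.lAB (N2 a3) a2 x2 x1 a1
    have Y9 := R.lpWA a1 a2 (N1 x1) x2 a3
    have Y10 := R.lpWA a1 a2 (N1 x2) x1 a3
    have Y11 := R.lApV a1 a2 (N1 x1) x2 a3
    have Y12 := R.lAψ (N1 x2) a1 a2 x1 a3
    have Y13 := R.lAB (N2 a1) a2 x1 x2 a3
    have Y14 := R.lAB (N2 a2) a1 x1 x2 a3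
    linear_combination (norm := module) hc5 + i19 - i18 + AN + i17 + Em
      + Y1 - Y2 + Y3 - Y4 - Y5 + Y6 - Y7 + Y8 + Y9 - Y10 - Y11 + Y12 - Y13 + Y14
  · -- 2co-6
    intro a1 a2 x1 x2 x3
    have hc6 := hcc.2.2.2.2.2.1 a1 a2 x1 x2 x3
    simp only [MPRep.toData] at hc6 ⊢
    simp only [heω, heν, heφ, map_add, map_sub, LinearMap.add_apply, LinearMap.sub_apply]
    have i9 := R.iden9 x2 x3 a1 a2 (N1 x1)
    have i11 := R.iden11 a1 a2 x1 x3 (N1 x2)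
    have AN2 := R.rV.anti x3 (M.ψ.ρ a1 a2 x1) (N1 x2)
    have AN3 : R.pV.ρ a1 a2 (R.rV.ρ x3 x1 (N1 x2))
        = - R.pV.ρ a1 a2 (R.rV.ρ x1 x3 (N1 x2)) := by
      rw [R.rV.anti x3 x1, map_neg]
    have i12 := R.iden12 a1 a2 x1 x2 (N1 x3)
    have Em := congrArg N1 (M.mp3 a1 a2 x1 x2 x3)
    simp only [map_add] at Em
    have Z1 := R.lBrW x2 x3 (N2 a1) a2 x1
    have Z2 := R.lBrW x2 x3 (N2 a2) a1 x1
    have Z3 := R.lBA (N1 x2) x3 a1 a2 x1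
    have Z4 := R.lBA (N1 x3) x2 a1 a2 x1
    have Z5 := R.lBA (N1 x2) x3 a2 a1 x1
    have Z6 := R.lBA (N1 x3) x2 a2 a1 x1
    have rvb1 := R.lrVB x2 x3 (N2 a1) a2 x1
    have rvb2 := R.lrVB x2 x3 (N2 a2) a1 x1
    have bbr1 := R.lBbr (N2 a1) a2 x1 x2 x3
    have bbr2 := R.lBbr (N2 a2) a1 x1 x2 x3
    linear_combination (norm := module) hc6 - i9 + i11 + AN3 - AN2 - i12 + Em
      + Z1 - Z2 + Z3 - Z4 - Z5 + Z6 - rvb1 + rvb2 + bbr1 - bbr2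
  · -- 2co-7
    intro x1 x2 a1 a2 a3
    have hc7 := hcc.2.2.2.2.2.2.1 x1 x2 a1 a2 a3
    simp only [MPRep.toData] at hc7 ⊢
    simp only [heθ, heν, heφ, map_add, map_sub, LinearMap.add_apply, LinearMap.sub_apply]
    have i21 := R.iden21 a2 a3 x1 x2 (N2 a1)
    have Dh := R.lDη x1 x2 a3 a1 (N2 a2)
    have Dp := R.lDpr x1 x2 a3 a1 (N2 a2)
    have i24 := R.iden24 x1 x2 a1 a2 (N2 a3)
    have Em := congrArg N2 (M.mp6 x1 x2 a1 a2 a3)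
    simp only [map_add] at Em
    have Y1 := R.lpWA a2 a3 (N1 x1) x2 a1
    have Y2 := R.lpWA a2 a3 (N1 x2) x1 a1
    have Y3 := R.lAψ (N1 x2) a2 a3 x1 a1
    have Y4 := R.lAψ (N1 x1) a2 a3 x2 a1
    have Y5 := R.lApV a2 a3 (N1 x1) x2 a1
    have Y6 := R.lApV a2 a3 (N1 x2) x1 a1
    have Y7 := R.lAB (N2 a2) a3 x1 x2 a1
    have Y8 := R.lAB (N2 a3) a2 x1 x2 a1
    have Y9 := R.lAB (N2 a2) a3 x2 x1 a1
    have Y10 := R.lAB (N2 a3) a2 x2 x1 a1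
    have Y11 := R.lAbrh (N1 x1) x2 a1 a2 a3
    have Y12 := R.lAbrh (N1 x2) x1 a1 a2 a3
    linear_combination (norm := module) hc7 - i21 + Dh - Dp - i24 + Em
      - Y1 + Y2 - Y3 + Y4 + Y5 - Y6 + Y7 - Y8 - Y9 + Y10 + Y11 - Y12
  · -- 2co-8
    intro a1 a2 a3 a4 a5
    have hc8 := hcc.2.2.2.2.2.2.2 a1 a2 a3 a4 a5
    simp only [MPRep.toData] at hc8 ⊢
    simp only [heθ, map_add, map_sub, LinearMap.add_apply, LinearMap.sub_apply]
    have E1 := R.pW.rep2' a2 a3 a4 a5 (N2 a1)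
    have E2 := R.pW.rep2 a3 a4 a5 a1 (N2 a2)
    have E3 := R.pW.rep1 a1 a2 a4 a5 (N2 a3)
    have E4 := R.pW.rep1 a1 a2 a5 a3 (N2 a4)
    have E5 := R.pW.rep1 a1 a2 a3 a4 (N2 a5)
    have EN := congrArg N2 (M.Lh.fund a1 a2 a3 a4 a5)
    simp only [map_add] at EN
    linear_combination (norm := module) hc8 + E1 - E2 - E3 - E4 - E5 + EN

end LemmaB

/-- If a pair of automorphisms `(α, β)` belongs to the subgroup
`C` of compatible pairs, then the transformed 2-cochain
`(ω, θ, ν, φ)_{(α, β)}` is again a 2-cocycle. -/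
theorem transformed_cochain_is_cocycle
    {k : Type*} [Field k] {g h V W ghat hhat : Type*}
    [AddCommGroup g] [Module k g] [AddCommGroup h] [Module k h]
    [AddCommGroup V] [Module k V] [AddCommGroup W] [Module k W]
    [AddCommGroup ghat] [Module k ghat] [AddCommGroup hhat] [Module k hhat]
    {M : MatchedPair k g h} (E : AbelianExt k g h V W ghat hhat M)
    (s1 : g →ₗ[k] ghat) (s2 : h →ₗ[k] hhat) (hs : IsSection E s1 s2)
    (R : MPRep (V := V) (W := W) M) (hR : IsInducedRep E R.toData)
    (c : Cochain2 k g h V W) (hc : IsExtCocycle E s1 s2 c)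
    (α1 : g ≃ₗ[k] g) (α2 : h ≃ₗ[k] h) (hα : IsMPAut M α1 α2)
    (β1 : V ≃ₗ[k] V) (β2 : W ≃ₗ[k] W)
    (hC : InC M R.toData c α1 α2 β1 β2) :
    ∀ c' : Cochain2 k g h V W, IsTransformed c α1 α2 β1 β2 c' →
      IsCocycle2 M R.toData c' := by
  intro c' hct
  obtain ⟨ζ, η, hI1, hI2, hI3, hI4⟩ := hC
  obtain ⟨hb1, hb2, hb3, hb4⟩ := hα
  have hα1br : ∀ x y z : g, M.Lg.br (α1.symm x) (α1.symm y) (α1.symm z)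
      = α1.symm (M.Lg.br x y z) := by
    intro x y z
    apply α1.injective
    rw [hb1]
    simp only [LinearEquiv.apply_symm_apply]
  have hα2br : ∀ a b d : h, M.Lh.br (α2.symm a) (α2.symm b) (α2.symm d)
      = α2.symm (M.Lh.br a b d) := by
    intro a b d
    apply α2.injective
    rw [hb2]
    simp only [LinearEquiv.apply_symm_apply]
  have hρsymm : ∀ (x y : g) (a : h), M.ρ.ρ (α1.symm x) (α1.symm y) (α2.symm a)
      = α2.symm (M.ρ.ρ x y a) := by
    intro x y a
    apply α2.injective
    rw [hb3]
    simp only [LinearEquiv.apply_symm_apply]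
  have hψsymm : ∀ (a b : h) (x : g), M.ψ.ρ (α2.symm a) (α2.symm b) (α1.symm x)
      = α1.symm (M.ψ.ρ a b x) := by
    intro a b x
    apply α1.injective
    rw [hb4]
    simp only [LinearEquiv.apply_symm_apply]
  refine isCocycle2_add_d1 R c c'
    (extCocycle_isCocycle2 E s1 s2 hs R.toData hR c hc)
    (ζ ∘ₗ (α1.symm : g ≃ₗ[k] g).toLinearMap)
    (η ∘ₗ (α2.symm : h ≃ₗ[k] h).toLinearMap) ?_ ?_ ?_ ?_
  · intro x1 x2 x3
    have hh := hI1 (α1.symm x1) (α1.symm x2) (α1.symm x3)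
    simp only [LinearEquiv.apply_symm_apply, MPRep.toData] at hh
    rw [hα1br] at hh
    rw [hct.1]
    simp only [LinearMap.comp_apply, LinearEquiv.coe_coe]
    linear_combination (norm := module) hh
  · intro x1 x2 a
    have hh := hI3 (α1.symm x1) (α1.symm x2) (α2.symm a)
    simp only [LinearEquiv.apply_symm_apply, MPRep.toData] at hh
    rw [hρsymm] at hh
    rw [hct.2.2.1]
    simp only [LinearMap.comp_apply, LinearEquiv.coe_coe]
    linear_combination (norm := module) hh
  · intro a1 a2 x
    have hh := hI4 (α2.symm a1) (α2.symm a2) (α1.symm x)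
    simp only [LinearEquiv.apply_symm_apply, MPRep.toData] at hh
    rw [hψsymm] at hh
    rw [hct.2.2.2]
    simp only [LinearMap.comp_apply, LinearEquiv.coe_coe]
    linear_combination (norm := module) hh
  · intro a1 a2 a3
    have hh := hI2 (α2.symm a1) (α2.symm a2) (α2.symm a3)
    simp only [LinearEquiv.apply_symm_apply, MPRep.toData] at hh
    rw [hα2br] at hh
    rw [hct.2.1]
    simp only [LinearMap.comp_apply, LinearEquiv.coe_coe]
    linear_combination (norm := module) hh
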